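/- arXiv:1812.11297 — 4 statements merged into one kernel-verified Lean document; each statement's English description precedes it below -/
import Mathlib

section
/- If f(ξ) = -∑_{c,t} |ξ_c^t - ξ̂_c^t| is the negative Manhattan distance from a fixed ideal distribution ξ̂, then f is pseudo M-concave: for every two distinct distributions ξ, ξ' with the same coordinate sum, there exist indices (c,t) and (c',t') with ξ_c^t > ξ'_c^t and ξ_{c'}^{t'} < ξ'_{c'}^{t'} such that min{f(ξ - χ_{c,t} + χ_{c',t'}), f(ξ' + χ_{c,t} - χ_{c',t'})} ≥ min{f(ξ), f(ξ')}. -/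
open Finset

/-- Move one unit from coordinate `i` to coordinate `j`:  ξ - χ_i + χ_j. -/
def move {ι : Type*} [DecidableEq ι] (ξ : ι → ℕ) (i j : ι) : ι → ℕ :=
  fun k => ξ k - (if k = i then 1 else 0) + (if k = j then 1 else 0)

/-- The negative Manhattan distance to an ideal distribution `ξhat`. -/
def manhattanF {ι : Type*} [Fintype ι] (ξhat ξ : ι → ℕ) : ℤ :=
  -∑ p, |(ξ p : ℤ) - (ξhat p : ℤ)|

/-! Each coordinate contributes the concave function `x ↦ -|x - ξhat p|` to `manhattanF`, so a
move changes it by `±1` at each end: `+1` exactly when that end moves towards `ξhat`. Let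
`A = {ξ' < ξ}` and `B = {ξ < ξ'}`; by concavity, lowering `ξ` at `i ∈ A` gains or raising `ξ'`
at `i` gains, and likewise at `j ∈ B`. A pair `(i, j)` for which both moves are nonnegative exists
unless one of the two exchanges never gains anywhere; then one distribution lies coordinatewise
between the other and `ξhat`, and is therefore at least `2` closer to `ξhat`, which absorbs the
loss of `2` on its side. -/

theorem exists_lt_of_sum_eq_of_ne {ι M : Type*} [Fintype ι] [AddCommMonoid M] [LinearOrder M]
    [IsOrderedCancelAddMonoid M] {f g : ι → M} (hne : f ≠ g) (hsum : ∑ i, f i = ∑ i, g i) :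
    ∃ i, g i < f i := by
  by_contra! hle
  refine hne (funext fun i => ?_)
  exact (sum_eq_sum_iff_of_le fun i _ => hle i).mp hsum i (mem_univ i)

theorem exists_pair_of_exists_gain {α β : Type*} {A P P' : α → Prop} {B Q Q' : β → Prop}
    (hA : ∀ i, A i → P i ∨ P' i) (hB : ∀ j, B j → Q j ∨ Q' j) {i₀ : α} {j₀ : β}
    (hi₀ : A i₀) (hj₀ : B j₀) (hgain : (∃ i, A i ∧ P i) ∨ ∃ j, B j ∧ Q j)
    (hgain' : (∃ i, A i ∧ P' i) ∨ ∃ j, B j ∧ Q' j) :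
    ∃ i j, A i ∧ B j ∧ (P i ∨ Q j) ∧ (P' i ∨ Q' j) := by
  rcases hgain with ⟨i, hi, hP⟩ | ⟨j, hj, hQ⟩ <;> rcases hgain' with ⟨i', hi', hP'⟩ | ⟨j', hj', hQ'⟩
  · rcases hB j₀ hj₀ with hQ | hQ'
    · exact ⟨i', j₀, hi', hj₀, .inr hQ, .inl hP'⟩
    · exact ⟨i, j₀, hi, hj₀, .inl hP, .inr hQ'⟩
  · exact ⟨i, j', hi, hj', .inl hP, .inr hQ'⟩
  · exact ⟨i', j, hi', hj, .inr hQ, .inl hP'⟩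
  · rcases hA i₀ hi₀ with hP | hP'
    · exact ⟨i₀, j', hi₀, hj', .inl hP, .inr hQ'⟩
    · exact ⟨i₀, j, hi₀, hj, .inr hQ, .inl hP'⟩

theorem abs_sub_sub_abs_sub_of_between {a b c : ℤ} (h₁ : b < a → c ≤ b) (h₂ : a < b → b ≤ c) :
    |a - c| - |b - c| = |a - b| := by
  grind

theorem manhattanF_move {ι : Type*} [Fintype ι] [DecidableEq ι] (ξhat ξ : ι → ℕ) {i j : ι}
    (hij : i ≠ j) (hi : 0 < ξ i) :
    manhattanF ξhat (move ξ i j) = manhattanF ξhat ξ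
      + (if ξhat i < ξ i then 1 else -1) + (if ξ j < ξhat j then 1 else -1) := by
  have hdiff : ∑ p, (|(ξ p : ℤ) - ξhat p| - |(move ξ i j p : ℤ) - ξhat p|)
      = (|(ξ i : ℤ) - ξhat i| - |(ξ i : ℤ) - 1 - ξhat i|)
        + (|(ξ j : ℤ) - ξhat j| - |(ξ j : ℤ) + 1 - ξhat j|) := by
    rw [Fintype.sum_eq_add i j hij fun p ⟨hpi, hpj⟩ => by simp [move, hpi, hpj]]
    simp only [move, if_true, if_neg hij, if_neg hij.symm, Nat.sub_zero, add_zero]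
    push_cast [hi]
    ring_nf
  rw [sum_sub_distrib] at hdiff
  unfold manhattanF
  split_ifs <;> grind

theorem le_manhattanF_move {ι : Type*} [Fintype ι] [DecidableEq ι] (ξhat ξ : ι → ℕ) {i j : ι}
    (hij : i ≠ j) (hi : 0 < ξ i) (hgain : ξhat i < ξ i ∨ ξ j < ξhat j) :
    manhattanF ξhat ξ ≤ manhattanF ξhat (move ξ i j) := by
  rw [manhattanF_move ξhat ξ hij hi]
  split_ifs <;> omega

theorem manhattanF_sub_two_le_move {ι : Type*} [Fintype ι] [DecidableEq ι] (ξhat ξ : ι → ℕ)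
    {i j : ι} (hij : i ≠ j) (hi : 0 < ξ i) :
    manhattanF ξhat ξ - 2 ≤ manhattanF ξhat (move ξ i j) := by
  rw [manhattanF_move ξhat ξ hij hi]
  split_ifs <;> omega

theorem manhattanF_add_two_le_of_between {ι : Type*} [Fintype ι] (ξhat ξ ξ' : ι → ℕ) {i j : ι}
    (hbetween : ∀ p, (ξ' p < ξ p → ξhat p ≤ ξ' p) ∧ (ξ p < ξ' p → ξ' p ≤ ξhat p))
    (hi : ξ' i < ξ i) (hj : ξ j < ξ' j) :
    manhattanF ξhat ξ + 2 ≤ manhattanF ξhat ξ' := by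
  have hij : i ≠ j := by rintro rfl; omega
  have hdist : ∀ p, |(ξ p : ℤ) - ξhat p| - |(ξ' p : ℤ) - ξhat p| = |(ξ p : ℤ) - ξ' p| := fun p =>
    abs_sub_sub_abs_sub_of_between (by have := (hbetween p).1; omega)
      (by have := (hbetween p).2; omega)
  have hpair : |(ξ i : ℤ) - ξ' i| + |(ξ j : ℤ) - ξ' j| ≤ ∑ p, |(ξ p : ℤ) - ξ' p| :=
    add_le_sum (f := fun p => |(ξ p : ℤ) - ξ' p|) (fun p _ => abs_nonneg _) (mem_univ i) (mem_univ j) hij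
  have hi' : 1 ≤ |(ξ i : ℤ) - ξ' i| := Int.one_le_abs (by omega)
  have hj' : 1 ≤ |(ξ j : ℤ) - ξ' j| := Int.one_le_abs (by omega)
  rw [← sum_congr rfl fun p _ => hdist p, sum_sub_distrib] at hpair
  unfold manhattanF
  omega

theorem min_manhattanF_le_move_of_between {ι : Type*} [Fintype ι] [DecidableEq ι]
    (ξhat ξ ξ' : ι → ℕ) {i j : ι}
    (hbetween : ∀ p, (ξ' p < ξ p → ξhat p ≤ ξ' p) ∧ (ξ p < ξ' p → ξ' p ≤ ξhat p))
    (hi : ξ' i < ξ i) (hj : ξ j < ξ' j) :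
    min (manhattanF ξhat ξ) (manhattanF ξhat ξ')
      ≤ min (manhattanF ξhat (move ξ i j)) (manhattanF ξhat (move ξ' j i)) := by
  have hij : i ≠ j := by rintro rfl; omega
  have hcloser := manhattanF_add_two_le_of_between ξhat ξ ξ' hbetween hi hj
  have hgain := le_manhattanF_move ξhat ξ hij (by omega) (.inl (by have := (hbetween i).1 hi; omega))
  have hloss := manhattanF_sub_two_le_move ξhat ξ' hij.symm (by omega)
  omega

/-- The negative Manhattan distance from a fixed ideal distribution is
pseudo M-concave. -/
theorem manhattan_pseudo_M_concave {ι : Type*} [Fintype ι] [DecidableEq ι]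
    (ξhat : ι → ℕ) (ξ ξ' : ι → ℕ) (hne : ξ ≠ ξ')
    (hsum : ∑ p, ξ p = ∑ p, ξ' p) :
    ∃ i j : ι, ξ' i < ξ i ∧ ξ j < ξ' j ∧
      min (manhattanF ξhat (move ξ i j)) (manhattanF ξhat (move ξ' j i))
        ≥ min (manhattanF ξhat ξ) (manhattanF ξhat ξ') := by
  obtain ⟨i₀, hi₀⟩ := exists_lt_of_sum_eq_of_ne hne hsum
  obtain ⟨j₀, hj₀⟩ := exists_lt_of_sum_eq_of_ne hne.symm hsum.symm
  by_cases hgain : ∃ p, (ξ' p < ξ p ∧ ξhat p < ξ p) ∨ (ξ p < ξ' p ∧ ξ p < ξhat p)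
  · by_cases hgain' : ∃ p, (ξ' p < ξ p ∧ ξ' p < ξhat p) ∨ (ξ p < ξ' p ∧ ξhat p < ξ' p)
    · obtain ⟨i, j, hi, hj, hij, hij'⟩ := exists_pair_of_exists_gain
        (fun i (_ : ξ' i < ξ i) => by omega) (fun j (_ : ξ j < ξ' j) => by omega)
        hi₀ hj₀ (exists_or.mp hgain) (exists_or.mp hgain')
      have hne_ij : i ≠ j := by rintro rfl; omega
      exact ⟨i, j, hi, hj, min_le_min (le_manhattanF_move ξhat ξ hne_ij (by omega) hij)
        (le_manhattanF_move ξhat ξ' hne_ij.symm (by omega) hij'.symm)⟩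
    · push Not at hgain'
      exact ⟨i₀, j₀, hi₀, hj₀, min_manhattanF_le_move_of_between ξhat ξ ξ' hgain' hi₀ hj₀⟩
  · push Not at hgain
    refine ⟨i₀, j₀, hi₀, hj₀, ?_⟩
    rw [ge_iff_le, min_comm, min_comm (manhattanF ξhat (move ξ i₀ j₀))]
    exact min_manhattanF_le_move_of_between ξhat ξ' ξ (fun p => (hgain p).symm) hj₀ hi₀
end

section
/- Let Ξ be a school-level diversity policy: Ξ = {ξ : p_c^t ≤ ξ_c^t ≤ q_c^t for all schools c and types t}, for fixed integer floors p_c^t and ceilings q_c^t. Then Ξ ∩ Ξ⁰ is an M-convex set. -/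
open Finset

/-- A set of distributions is M-convex. -/
def MConvex {ι : Type*} [DecidableEq ι] (S : Set (ι → ℕ)) : Prop :=
  ∀ ξ ∈ S, ∀ ξ' ∈ S, ∀ i, ξ' i < ξ i →
    ∃ j, ξ j < ξ' j ∧ move ξ i j ∈ S ∧ move ξ' j i ∈ S

/-- The set Ξ⁰ of distributions with total sum `N` respecting the school
capacities `q`. -/
def Xi0 {C T : Type*} [Fintype C] [Fintype T] (N : ℕ) (q : C → ℕ) :
    Set (C × T → ℕ) :=
  {ξ | (∑ p, ξ p = N) ∧ ∀ c, ∑ t, ξ (c, t) ≤ q c}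

/-!
Given `ξ' i < ξ i` with `i = (c, t)`, take a unit away from `i` in `ξ` and give it to a
coordinate `j` with `ξ j < ξ' j`. The floors and ceilings are never violated, since `ξ` only
moves towards `ξ'`. If `j` can be chosen at the same school `c`, school totals are unchanged.
Otherwise every type at `c` has `ξ ≤ ξ'` there, so school `c` holds strictly more students in
`ξ` than in `ξ'`; as both distributions have total `N`, some school `c'` holds strictly fewer,
and a type `t'` at `c'` with `ξ (c', t') < ξ' (c', t')` is the partner. The capacity of `c'`
then has room in `ξ` because `ξ'` fits there, and symmetrically `c` has room in `ξ'`.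
-/

lemma Finset.exists_lt_of_sum_eq_of_lt {ι M : Type*} [AddCommMonoid M] [LinearOrder M]
    [IsOrderedCancelAddMonoid M] {s : Finset ι} {f g : ι → M} {a : ι}
    (hsum : ∑ i ∈ s, f i = ∑ i ∈ s, g i) (ha : a ∈ s) (hlt : g a < f a) :
    ∃ b ∈ s, f b < g b := by
  contrapose! hsum
  exact (sum_lt_sum hsum ⟨a, ha, hlt⟩).ne'

section Move

variable {ι : Type*} [DecidableEq ι] {ξ : ι → ℕ} {i j : ι}

lemma move_add_ite (hi : 1 ≤ ξ i) (k : ι) :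
    move ξ i j k + (if k = i then 1 else 0) = ξ k + (if k = j then 1 else 0) := by
  unfold move
  split_ifs <;> subst_vars <;> omega

lemma sum_move_add_ite (hi : 1 ≤ ξ i) (s : Finset ι) :
    ∑ k ∈ s, move ξ i j k + (if i ∈ s then 1 else 0) =
      ∑ k ∈ s, ξ k + (if j ∈ s then 1 else 0) := by
  rw [← sum_ite_eq' s i fun _ => 1, ← sum_ite_eq' s j fun _ => 1, ← sum_add_distrib,
    ← sum_add_distrib]
  exact sum_congr rfl fun k _ => move_add_ite hi k

lemma sum_move [Fintype ι] (hi : 1 ≤ ξ i) : ∑ k, move ξ i j k = ∑ k, ξ k := by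
  simpa using sum_move_add_ite (j := j) hi univ

lemma move_mem_box {l u : ι → ℕ} (hξ : ∀ k, l k ≤ ξ k ∧ ξ k ≤ u k) (hi : l i < ξ i)
    (hj : ξ j < u j) (k : ι) : l k ≤ move ξ i j k ∧ move ξ i j k ≤ u k := by
  have := hξ k
  unfold move
  split_ifs <;> subst_vars <;> omega

end Move

section School

variable {C T : Type*}

lemma exists_exchange_partner {M : Type*} [AddCommMonoid M] [LinearOrder M]
    [IsOrderedCancelAddMonoid M] [Fintype C] [Fintype T] {ξ ξ' : C × T → M}
    (htot : ∑ k, ξ k = ∑ k, ξ' k) {i : C × T} (hi : ξ' i < ξ i) :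
    ∃ j, ξ j < ξ' j ∧ (j.1 = i.1 ∨
      ∑ t, ξ (j.1, t) < ∑ t, ξ' (j.1, t) ∧ ∑ t, ξ' (i.1, t) < ∑ t, ξ (i.1, t)) := by
  obtain ⟨c, t⟩ := i
  by_cases hsame : ∃ t', ξ (c, t') < ξ' (c, t')
  · obtain ⟨t', ht'⟩ := hsame
    exact ⟨(c, t'), ht', Or.inl rfl⟩
  push Not at hsame
  have hc : ∑ t, ξ' (c, t) < ∑ t, ξ (c, t) :=
    sum_lt_sum (fun t' _ => hsame t') ⟨t, mem_univ t, hi⟩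
  obtain ⟨c', -, hc'⟩ := exists_lt_of_sum_eq_of_lt
    (by simpa only [Fintype.sum_prod_type] using htot) (mem_univ c) hc
  obtain ⟨t', -, ht'⟩ := exists_lt_of_sum_lt hc'
  exact ⟨(c', t'), ht', Or.inr ⟨hc', hc⟩⟩

def schoolLevelDiversity (p qct : C → T → ℕ) : Set (C × T → ℕ) :=
  {ξ | ∀ c t, p c t ≤ ξ (c, t) ∧ ξ (c, t) ≤ qct c t}

variable {ξ ξ' : C × T → ℕ} {i j : C × T}

lemma move_mem_schoolLevelDiversity [DecidableEq C] [DecidableEq T] {p qct : C → T → ℕ}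
    (hξ : ξ ∈ schoolLevelDiversity p qct) (hξ' : ξ' ∈ schoolLevelDiversity p qct)
    (hi : ξ' i < ξ i) (hj : ξ j < ξ' j) : move ξ i j ∈ schoolLevelDiversity p qct :=
  fun c t => move_mem_box (l := fun k => p k.1 k.2) (u := fun k => qct k.1 k.2)
    (fun k => hξ k.1 k.2) (hi.trans_le' (hξ' i.1 i.2).1) (hj.trans_le (hξ' j.1 j.2).2) (c, t)

lemma sum_move_section_add_ite [DecidableEq C] [DecidableEq T] [Fintype T] (hi : 1 ≤ ξ i)
    (d : C) :
    ∑ t, move ξ i j (d, t) + (if i.1 = d then 1 else 0) =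
      ∑ t, ξ (d, t) + (if j.1 = d then 1 else 0) := by
  simpa [Prod.ext_iff, eq_comm] using
    sum_move_add_ite (j := j) hi (univ.map (Function.Embedding.sectR d T))

lemma move_mem_Xi0 [DecidableEq C] [DecidableEq T] [Fintype C] [Fintype T] {N : ℕ} {q : C → ℕ}
    (hξ : ξ ∈ Xi0 N q) (hi : 1 ≤ ξ i) (hroom : j.1 = i.1 ∨ ∑ t, ξ (j.1, t) < q j.1) :
    move ξ i j ∈ Xi0 N q := by
  refine ⟨(sum_move hi).trans hξ.1, fun d => ?_⟩
  have hsection := sum_move_section_add_ite (j := j) hi d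
  have hcap := hξ.2 d
  rcases hroom with hsame | hroom
  · rw [hsame] at hsection
    split_ifs at hsection <;> omega
  · by_cases hjd : j.1 = d
    · subst hjd
      split_ifs at hsection <;> omega
    · split_ifs at hsection <;> omega

end School

/-- For a school-level diversity policy (type-specific floors `p` and
ceilings `qct` at each school), `Ξ ∩ Ξ⁰` is an M-convex set. -/
theorem schoolLevelDiversity_MConvex
    {C T : Type*} [Fintype C] [Fintype T] [DecidableEq C] [DecidableEq T]
    (N : ℕ) (q : C → ℕ) (p qct : C → T → ℕ) :
    MConvex ({ξ : C × T → ℕ | ∀ c t, p c t ≤ ξ (c, t) ∧ ξ (c, t) ≤ qct c t}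
      ∩ Xi0 (T := T) N q) := by
  change MConvex (schoolLevelDiversity p qct ∩ Xi0 N q)
  rintro ξ ⟨hξ, hξN⟩ ξ' ⟨hξ', hξ'N⟩ i hi
  obtain ⟨j, hj, hschool⟩ := exists_exchange_partner (hξN.1.trans hξ'N.1.symm) hi
  have hroom : j.1 = i.1 ∨ ∑ t, ξ (j.1, t) < q j.1 :=
    hschool.imp_right fun h => h.1.trans_le (hξ'N.2 j.1)
  have hroom' : i.1 = j.1 ∨ ∑ t, ξ' (i.1, t) < q i.1 :=
    (hschool.imp_right fun h => h.2.trans_le (hξN.2 i.1)).imp_left Eq.symm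
  exact ⟨j, hj,
    ⟨move_mem_schoolLevelDiversity hξ hξ' hi hj, move_mem_Xi0 hξN (by omega) hroom⟩,
    ⟨move_mem_schoolLevelDiversity hξ' hξ hj hi, move_mem_Xi0 hξ'N (by omega) hroom'⟩⟩
end

section
/- In the stable matching setting with district choice functions, if every district's admissions rule is acceptant and rationed, then in any stable matching X in which district choice functions are acceptant and rationed, every student is matched and each district d is matched with exactly k_d students. -/
open Finset

section

variable {S D C : Type*} [Fintype S] [Fintype C] [Fintype D]
  [DecidableEq S] [DecidableEq C] [DecidableEq D]

/-- A matching is feasible for students: each student has at most one contract. -/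
def feasibleS (X : Finset (S × C)) : Prop :=
  ∀ s : S, (X.filter (fun x => x.1 = s)).card ≤ 1

/-- A matching is feasible: feasible for students and each school `c` is
assigned at most `q c` contracts. -/
def feasible (q : C → ℕ) (X : Finset (S × C)) : Prop :=
  feasibleS X ∧ ∀ c : C, (X.filter (fun x => x.2 = c)).card ≤ q c

/-- Stability of a matching `X` with respect to district choice functions
`Ch` and student preferences `P` (every contract preferred to being
unmatched). -/
def stable (dc : C → D) (q : C → ℕ)
    (Ch : D → Finset (S × C) → Finset (S × C))
    (P : S → C → C → Prop) (X : Finset (S × C)) : Prop :=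
  feasible q X ∧
  (∀ d, Ch d X = X.filter (fun x => dc x.2 = d)) ∧
  ∀ s c, (s, c) ∉ X → (∀ y ∈ X, y.1 = s → P s c y.2) →
    (s, c) ∉ Ch (dc c) (insert (s, c) X)

end

/-! Rationing bounds each district's share of a stable matching by `k d`, and these quotas add up
to the number of students. If some district `d` fell short, some student `s` would be unmatched
and, since `k d` is at most the capacity of `d`, some school `c` of `d` would have a vacancy. By
stability `d` rejects `(s, c)` from `X ∪ {(s, c)}`, while everything it may choose there lies in
`X`: too few contracts at `c` and too few in total for acceptance to allow the rejection. So every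
district meets its quota, and then `X` has one contract per student. -/

section

variable {S D C : Type*}

theorem feasibleS.injOn_fst [DecidableEq S] {X : Finset (S × C)} (hX : feasibleS X) :
    Set.InjOn Prod.fst (X : Set (S × C)) := fun x hx y hy hxy =>
  card_le_one.1 (hX x.1) x (by simp_all) y (by simp_all)

theorem feasibleS.forall_matched_iff [Fintype S] [DecidableEq S] {X : Finset (S × C)}
    (hX : feasibleS X) :
    (∀ s, ∃ c, (s, c) ∈ X) ↔ X.card = Fintype.card S := by
  rw [← card_image_of_injOn hX.injOn_fst, card_eq_iff_eq_univ, eq_univ_iff_forall]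
  simp

theorem feasibleS.insert_of_unmatched [DecidableEq S] [DecidableEq C]
    {X : Finset (S × C)} (hX : feasibleS X) {s : S}
    (hs : ∀ c, (s, c) ∉ X) (c : C) : feasibleS (insert (s, c) X) := by
  intro t
  rw [filter_insert]
  split_ifs with hst
  · subst hst
    have : X.filter (fun x => x.1 = s) = ∅ :=
      filter_eq_empty_iff.2 fun x hx hxs => hs x.2 (hxs ▸ hx)
    simp [this]
  · exact hX t

theorem card_filter_district_eq_sum [Fintype C] [DecidableEq C] [DecidableEq D] (dc : C → D)
    (X : Finset (S × C)) (d : D) :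
    (X.filter (fun x => dc x.2 = d)).card =
      ∑ c ∈ univ.filter (fun c => dc c = d), (X.filter (fun x => x.2 = c)).card := by
  rw [card_eq_sum_card_fiberwise (f := Prod.snd) (t := univ.filter fun c => dc c = d)
    fun x hx => mem_filter.2 ⟨mem_univ _, (mem_filter.1 hx).2⟩]
  refine sum_congr rfl fun c hc => ?_
  rw [filter_filter]
  exact congrArg card (filter_congr fun x _ => by simp_all)

theorem exists_school_card_lt_capacity [Fintype C] [DecidableEq C] [DecidableEq D]
    {dc : C → D} {q : C → ℕ} {X : Finset (S × C)} {d : D}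
    (h : (X.filter (fun x => dc x.2 = d)).card < ∑ c ∈ univ.filter (fun c => dc c = d), q c) :
    ∃ c, dc c = d ∧ (X.filter (fun x => x.2 = c)).card < q c := by
  rw [card_filter_district_eq_sum] at h
  obtain ⟨c, hc, hlt⟩ := exists_lt_of_sum_lt h
  exact ⟨c, (mem_filter.1 hc).2, hlt⟩

theorem stable.le_card_filter_district [DecidableEq S] [DecidableEq C] [DecidableEq D]
    {dc : C → D} {q : C → ℕ} {k : D → ℕ} {Ch : D → Finset (S × C) → Finset (S × C)}
    (hsub : ∀ d X, Ch d X ⊆ X.filter (fun x => dc x.2 = d))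
    (hacc : ∀ d X (x : S × C), feasibleS X → x ∈ X → dc x.2 = d → x ∉ Ch d X →
      ((Ch d X).filter (fun y => y.2 = x.2)).card = q x.2 ∨ k d ≤ (Ch d X).card)
    {P : S → C → C → Prop} {X : Finset (S × C)} (hX : stable dc q Ch P X)
    {s : S} (hs : ∀ c, (s, c) ∉ X) {c : C} (hc : (X.filter (fun x => x.2 = c)).card < q c) :
    k (dc c) ≤ (X.filter (fun x => dc x.2 = dc c)).card := by
  obtain ⟨⟨hfs, -⟩, -, hblock⟩ := hX
  have hrej : (s, c) ∉ Ch (dc c) (insert (s, c) X) :=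
    hblock s c (hs c) fun y hy hys => absurd (hys ▸ hy) (hs y.2)
  have hchosen : Ch (dc c) (insert (s, c) X) ⊆ X.filter (fun x => dc x.2 = dc c) := by
    intro x hx
    have hx' := hsub _ _ hx
    rw [filter_insert, if_pos rfl, mem_insert] at hx'
    exact hx'.resolve_left (by rintro rfl; exact hrej hx)
  rcases hacc (dc c) _ (s, c) (hfs.insert_of_unmatched hs c) (mem_insert_self _ _) rfl hrej
    with hfull | hquota
  · have hle := card_le_card <|
      filter_subset_filter (fun y => y.2 = c) (hchosen.trans (filter_subset _ X))
    exact absurd (hfull.symm.le.trans hle) hc.not_ge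
  · exact hquota.trans (card_le_card hchosen)

end

section

variable {S D C : Type*} [Fintype S] [Fintype C] [Fintype D]
  [DecidableEq S] [DecidableEq C] [DecidableEq D]

/-- If every district's admissions rule is acceptant and rationed, then in
any stable matching every student is matched and each district `d` is
matched with exactly `k d` students. -/
theorem stable_balanced
    (ds : S → D) (dc : C → D) (q : C → ℕ) (k : D → ℕ)
    (hk : ∀ d, k d = (univ.filter (fun s => ds s = d)).card)
    (hcap : ∀ d, k d ≤ ∑ c ∈ univ.filter (fun c => dc c = d), q c)
    (Ch : D → Finset (S × C) → Finset (S × C))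
    (hsub : ∀ d X, Ch d X ⊆ X.filter (fun x => dc x.2 = d))
    (hacc : ∀ d X (x : S × C), feasibleS X → x ∈ X → dc x.2 = d → x ∉ Ch d X →
      ((Ch d X).filter (fun y => y.2 = x.2)).card = q x.2 ∨ k d ≤ (Ch d X).card)
    (hrat : ∀ d X, feasibleS X → (Ch d X).card ≤ k d)
    (P : S → C → C → Prop)
    (X : Finset (S × C)) (hX : stable dc q Ch P X) :
    (∀ s : S, ∃ c : C, (s, c) ∈ X) ∧
    (∀ d : D, (X.filter (fun x => dc x.2 = d)).card = k d) := by
  have hfs := hX.1.1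
  have hch := hX.2.1
  have hle : ∀ d, (X.filter (fun x => dc x.2 = d)).card ≤ k d := fun d => hch d ▸ hrat d X hfs
  have hcard : X.card = ∑ d, (X.filter (fun x => dc x.2 = d)).card :=
    card_eq_sum_card_fiberwise fun x _ => mem_univ (dc x.2)
  have hsumk : ∑ d, k d = Fintype.card S := by
    rw [← card_univ, card_eq_sum_card_fiberwise fun s _ => mem_univ (ds s)]
    exact sum_congr rfl fun d _ => hk d
  have heq : ∀ d, (X.filter (fun x => dc x.2 = d)).card = k d := by
    intro d
    refine (hle d).antisymm (not_lt.1 fun hlt => ?_)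
    have hX_lt : X.card < Fintype.card S := by
      rw [hcard, ← hsumk]
      exact sum_lt_sum (fun d _ => hle d) ⟨d, mem_univ d, hlt⟩
    obtain ⟨s, hs⟩ : ∃ s, ∀ c, (s, c) ∉ X := by
      by_contra! h
      exact hX_lt.ne (hfs.forall_matched_iff.1 h)
    obtain ⟨c, rfl, hc⟩ := exists_school_card_lt_capacity (hlt.trans_le (hcap d))
    exact hlt.not_ge (hX.le_card_filter_district hsub hacc hs hc)
  refine ⟨hfs.forall_matched_iff.2 ?_, heq⟩
  rw [hcard, ← hsumk]
  exact sum_congr rfl fun d _ => heq d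

end
end

section
/- Impossibility of district-level ceilings with efficiency: in the six-student, six-school, two-district instance with type ceilings q_d^{t₁} = q_d^{t₂} = 1 for both districts and the given student preferences, exactly two matchings X and X' satisfy the policy goal, constrained efficiency, and individual rationality; and for any mechanism selecting one of them at the true profile, some student has a profitable misreport. Hence no mechanism satisfies the policy goal, constrained efficiency, individual rationality, and strategy-proofness. -/
open Finset

/- Six students `s₁,…,s₆ = 0,…,5`, six schools `c₁,…,c₆ = 0,…,5`.
Schools `0,1,2` are in district `d₁ = 0`, schools `3,4,5` in district
`d₂ = 1`.  Preferences of a student are encoded by a permutation giving the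
rank of each school (smaller rank = more preferred). -/

/-- District of each school. -/
def distOf (c : Fin 6) : Fin 2 := if c.val < 3 then 0 else 1

/-- Types of the six students: `s₁,s₄` of type `t₁ = 0`, `s₂,s₅` of type
`t₂ = 1`, `s₃,s₆` of type `t₃ = 2`. -/
def typeOf : Fin 6 → Fin 3 := ![0, 1, 2, 0, 1, 2]

/-- A matching assigns each student to at most one school. -/
abbrev Matching := Fin 6 → Option (Fin 6)

/-- Each school has capacity one. -/
def Feasible (μ : Matching) : Prop :=
  ∀ s s' c, μ s = some c → μ s' = some c → s = s'

/-- Weak preference between outcomes, being unmatched worst. -/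
def wPref (P : Equiv.Perm (Fin 6)) : Option (Fin 6) → Option (Fin 6) → Prop
  | some c, some c' => P c ≤ P c'
  | some _, none => True
  | none, some _ => False
  | none, none => True

/-- The policy goal Ξ: at most one type-`t₁` and at most one type-`t₂`
student per district. -/
def Policy (μ : Matching) : Prop :=
  ∀ d : Fin 2, ∀ t : Fin 3, t ≠ 2 →
    (univ.filter (fun s : Fin 6 =>
      typeOf s = t ∧ ∃ c, μ s = some c ∧ distOf c = d)).card ≤ 1

/-- Pareto domination of `μ` by `μ'` at profile `P`. -/
def Dominates (P : Fin 6 → Equiv.Perm (Fin 6)) (μ' μ : Matching) : Prop :=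
  (∀ s, wPref (P s) (μ' s) (μ s)) ∧ ∃ s, μ' s ≠ μ s ∧ wPref (P s) (μ' s) (μ s)

/-- Constrained efficiency: satisfies the policy goal and is not Pareto
dominated by a feasible matching satisfying the policy goal. -/
def ConstrEff (P : Fin 6 → Equiv.Perm (Fin 6)) (μ : Matching) : Prop :=
  Policy μ ∧ ¬ ∃ μ', Feasible μ' ∧ Policy μ' ∧ Dominates P μ' μ

/-- Individual rationality relative to the initial matching `sᵢ ↦ cᵢ`. -/
def IR (P : Fin 6 → Equiv.Perm (Fin 6)) (μ : Matching) : Prop :=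
  ∀ s : Fin 6, wPref (P s) (μ s) (some s)

/-- The true preference profile of Example 5 (`…` parts arbitrary):
`s₁: c₆ ≻ c₁ ≻ ⋯`, `s₂: c₆ ≻ c₂ ≻ ⋯`, `s₃: c₅ ≻ c₄ ≻ c₃ ≻ ⋯`,
`s₄: c₃ ≻ c₄ ≻ ⋯`, `s₅: c₃ ≻ c₅ ≻ ⋯`, `s₆: c₁ ≻ c₂ ≻ c₆ ≻ ⋯`. -/
def Consistent (P : Fin 6 → Equiv.Perm (Fin 6)) : Prop :=
  (P 0 5 < P 0 0 ∧ ∀ c, c ≠ 5 → c ≠ 0 → P 0 0 < P 0 c) ∧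
  (P 1 5 < P 1 1 ∧ ∀ c, c ≠ 5 → c ≠ 1 → P 1 1 < P 1 c) ∧
  (P 2 4 < P 2 3 ∧ P 2 3 < P 2 2 ∧ ∀ c, c ≠ 4 → c ≠ 3 → c ≠ 2 → P 2 2 < P 2 c) ∧
  (P 3 2 < P 3 3 ∧ ∀ c, c ≠ 2 → c ≠ 3 → P 3 3 < P 3 c) ∧
  (P 4 2 < P 4 4 ∧ ∀ c, c ≠ 2 → c ≠ 4 → P 4 4 < P 4 c) ∧
  (P 5 0 < P 5 1 ∧ P 5 1 < P 5 5 ∧ ∀ c, c ≠ 0 → c ≠ 1 → c ≠ 5 → P 5 5 < P 5 c)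

/-- The matching X of Example 5. -/
def Xm : Matching := fun s => some (![5, 1, 3, 2, 4, 0] s)

/-- The matching X' of Example 5. -/
def Xm' : Matching := fun s => some (![0, 5, 4, 3, 2, 1] s)

/-! Individual rationality leaves each student at most three schools, and the ceilings couple
the two type-`t₁` students `s₁, s₄` and the two type-`t₂` students `s₂, s₅`: each pair must be
split across the districts, so `(s₁, s₄)` sits at `(c₁, c₄)` or `(c₆, c₃)` and `(s₂, s₅)` at
`(c₂, c₅)` or `(c₆, c₃)`. Capacity then leaves only the endowment, `X` and `X'`. Both `X` and `X'`
Pareto improve on the endowment and neither dominates the other, so they are the constrained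
efficient matchings. If a mechanism picks `X`, student `s₃` reports `c₅ ≻ c₃`, which makes `X`
irrational for her and forces `X'`, where she gets `c₅` instead of `c₄`; if it picks `X'`,
student `s₆` reports `c₁ ≻ c₆` and gets `c₁` instead of `c₂`. -/

def endowment : Matching := fun s => some s

instance (p : Equiv.Perm (Fin 6)) : DecidableRel (wPref p) := fun a b => by
  cases a <;> cases b <;> unfold wPref <;> infer_instance

lemma wPref_trans {p : Equiv.Perm (Fin 6)} {a b c : Option (Fin 6)}
    (hab : wPref p a b) (hbc : wPref p b c) : wPref p a c := by
  cases a <;> cases b <;> cases c <;> simp_all only [wPref]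
  exact le_trans hab hbc

section Dominance

variable {P : Fin 6 → Equiv.Perm (Fin 6)} {μ ν : Matching}

lemma IR.of_dominates (hd : Dominates P ν μ) (h : IR P μ) : IR P ν :=
  fun s => wPref_trans (hd.1 s) (h s)

lemma dominates_endowment (h : IR P ν) (hne : ν ≠ endowment) : Dominates P ν endowment := by
  obtain ⟨s, hs⟩ := Function.ne_iff.1 hne
  exact ⟨h, s, hs, h s⟩

lemma not_dominates_self : ¬ Dominates P μ μ :=
  fun ⟨_, _, hne, _⟩ => hne rfl

lemma not_dominates_of_lt {s c c' : Fin 6} (hν : ν s = some c') (hμ : μ s = some c)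
    (h : P s c < P s c') : ¬ Dominates P ν μ := fun hd => by
  have := hd.1 s
  rw [hν, hμ] at this
  exact not_le.2 h this

end Dominance

def Admissible (P : Fin 6 → Equiv.Perm (Fin 6)) (μ : Matching) : Prop :=
  Feasible μ ∧ Policy μ ∧ IR P μ

/-- A matching dominating an individually rational one is individually rational, so only
admissible matchings need to be tested for domination. -/
lemma constrEff_IR_iff_admissible {P : Fin 6 → Equiv.Perm (Fin 6)} {μ : Matching} :
    (Feasible μ ∧ Policy μ ∧ ConstrEff P μ ∧ IR P μ) ↔
      Admissible P μ ∧ ∀ ν, Admissible P ν → ¬ Dominates P ν μ := by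
  constructor
  · rintro ⟨hF, hPol, hCE, hIR⟩
    exact ⟨⟨hF, hPol, hIR⟩, fun ν ⟨hFν, hPolν, _⟩ hd => hCE.2 ⟨ν, hFν, hPolν, hd⟩⟩
  · rintro ⟨⟨hF, hPol, hIR⟩, h⟩
    refine ⟨hF, hPol, ⟨hPol, ?_⟩, hIR⟩
    rintro ⟨ν, hFν, hPolν, hd⟩
    exact h ν ⟨hFν, hPolν, hIR.of_dominates hd⟩ hd

lemma Policy.distOf_ne {μ : Matching} (hPol : Policy μ) {i j c c' : Fin 6} (hij : i ≠ j)
    (ht : typeOf i = typeOf j) (ht2 : typeOf i ≠ 2) (hi : μ i = some c) (hj : μ j = some c') :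
    distOf c ≠ distOf c' := fun hd => by
  have hsub : ({i, j} : Finset (Fin 6)) ⊆ univ.filter (fun s : Fin 6 =>
      typeOf s = typeOf i ∧ ∃ c₀, μ s = some c₀ ∧ distOf c₀ = distOf c) := by
    intro x hx
    rcases mem_insert.1 hx with rfl | hx
    · exact mem_filter.2 ⟨mem_univ _, rfl, c, hi, rfl⟩
    · rw [mem_singleton.1 hx]
      exact mem_filter.2 ⟨mem_univ _, ht.symm, c', hj, hd.symm⟩
  have := (card_le_card hsub).trans (hPol (distOf c) (typeOf i) ht2)
  rw [card_pair hij] at this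
  omega

/-- The schools each student weakly prefers to her own under `Consistent` preferences. -/
def acceptableSchools : Fin 6 → Finset (Fin 6) :=
  ![{0, 5}, {1, 5}, {2, 3, 4}, {2, 3}, {2, 4}, {0, 1, 5}]

def AcceptableWithin (P : Fin 6 → Equiv.Perm (Fin 6)) : Prop :=
  ∀ s c, P s c ≤ P s s → c ∈ acceptableSchools s

lemma Consistent.acceptableWithin {P : Fin 6 → Equiv.Perm (Fin 6)} (hP : Consistent P) :
    AcceptableWithin P := by
  obtain ⟨⟨-, b0⟩, ⟨-, b1⟩, ⟨-, -, b2⟩, ⟨-, b3⟩, ⟨-, b4⟩, ⟨-, -, b5⟩⟩ := hP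
  intro s c hc
  fin_cases s <;>
    simp only [acceptableSchools, Fin.zero_eta, Fin.mk_one, Fin.reduceFinMk, Fin.isValue,
      Matrix.cons_val, mem_insert, mem_singleton] at hc ⊢ <;>
    by_contra! hmem
  exacts [hc.not_gt (b0 c hmem.2 hmem.1), hc.not_gt (b1 c hmem.2 hmem.1),
    hc.not_gt (b2 c hmem.2.2 hmem.2.1 hmem.1), hc.not_gt (b3 c hmem.1 hmem.2),
    hc.not_gt (b4 c hmem.1 hmem.2), hc.not_gt (b5 c hmem.1 hmem.2.1 hmem.2.2)]

lemma eq_of_mem_acceptableSchools {c : Fin 6 → Fin 6} (hc : ∀ s, c s ∈ acceptableSchools s)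
    (hinj : Function.Injective c) (h03 : distOf (c 0) ≠ distOf (c 3))
    (h14 : distOf (c 1) ≠ distOf (c 4)) :
    c = id ∨ c = ![5, 1, 3, 2, 4, 0] ∨ c = ![0, 5, 4, 3, 2, 1] := by
  have hc0 := hc 0; have hc1 := hc 1; have hc2 := hc 2
  have hc3 := hc 3; have hc4 := hc 4; have hc5 := hc 5
  simp only [acceptableSchools, Fin.isValue, Matrix.cons_val, mem_insert, mem_singleton]
    at hc0 hc1 hc2 hc3 hc4 hc5
  have pair03 : c 0 = 0 ∧ c 3 = 3 ∨ c 0 = 5 ∧ c 3 = 2 := by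
    rcases hc0 with h0 | h0 <;> rcases hc3 with h3 | h3 <;> simp [h0, h3, distOf] at h03 ⊢
  have pair14 : c 1 = 1 ∧ c 4 = 4 ∨ c 1 = 5 ∧ c 4 = 2 := by
    rcases hc1 with h1 | h1 <;> rcases hc4 with h4 | h4 <;> simp [h1, h4, distOf] at h14 ⊢
  have n01 := hinj.ne (show (0 : Fin 6) ≠ 1 by decide)
  have n05 := hinj.ne (show (0 : Fin 6) ≠ 5 by decide)
  have n15 := hinj.ne (show (1 : Fin 6) ≠ 5 by decide)
  have n23 := hinj.ne (show (2 : Fin 6) ≠ 3 by decide)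
  have n24 := hinj.ne (show (2 : Fin 6) ≠ 4 by decide)
  have hvec : c = ![c 0, c 1, c 2, c 3, c 4, c 5] := by funext s; fin_cases s <;> rfl
  rw [hvec, show (id : Fin 6 → Fin 6) = ![0, 1, 2, 3, 4, 5] by decide]
  clear hvec hinj hc h03 h14
  rcases pair03 with ⟨h0, h3⟩ | ⟨h0, h3⟩ <;> rcases pair14 with ⟨h1, h4⟩ | ⟨h1, h4⟩ <;>
    rcases hc2 with h2 | h2 | h2 <;> rcases hc5 with h5 | h5 | h5 <;>
    simp_all

lemma Admissible.eq_endowment_or {P : Fin 6 → Equiv.Perm (Fin 6)} {μ : Matching}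
    (hP : AcceptableWithin P) (h : Admissible P μ) : μ = endowment ∨ μ = Xm ∨ μ = Xm' := by
  obtain ⟨hF, hPol, hIR⟩ := h
  have hsome : ∀ s, ∃ c ∈ acceptableSchools s, μ s = some c := by
    intro s
    have hs := hIR s
    cases hμ : μ s with
    | none => rw [hμ] at hs; exact hs.elim
    | some c => rw [hμ] at hs; exact ⟨c, hP s c hs, rfl⟩
  choose c hc hμ using hsome
  have hinj : Function.Injective c := fun s t h => hF s t (c t) (by rw [hμ, h]) (hμ t)
  have h03 := hPol.distOf_ne (i := 0) (j := 3) (by decide) rfl (by decide) (hμ 0) (hμ 3)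
  have h14 := hPol.distOf_ne (i := 1) (j := 4) (by decide) rfl (by decide) (hμ 1) (hμ 4)
  rw [funext hμ]
  rcases eq_of_mem_acceptableSchools hc hinj h03 h14 with rfl | rfl | rfl
  exacts [.inl rfl, .inr (.inl rfl), .inr (.inr rfl)]

lemma admissible_endowment (P : Fin 6 → Equiv.Perm (Fin 6)) : Admissible P endowment :=
  ⟨by unfold Feasible endowment; decide, by unfold Policy endowment; decide,
    fun s => le_refl (P s s)⟩

lemma feasible_Xm : Feasible Xm := by unfold Feasible; decide

lemma policy_Xm : Policy Xm := by unfold Policy; decide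

lemma feasible_Xm' : Feasible Xm' := by unfold Feasible; decide

lemma policy_Xm' : Policy Xm' := by unfold Policy; decide

section Consistent

variable {P : Fin 6 → Equiv.Perm (Fin 6)} (hP : Consistent P)
include hP

lemma Consistent.IR_Xm : IR P Xm := by
  obtain ⟨⟨a0, -⟩, -, ⟨-, a2, -⟩, ⟨a3, -⟩, -, ⟨a5, a5', -⟩⟩ := hP
  intro s
  fin_cases s
  exacts [a0.le, le_rfl, a2.le, a3.le, le_rfl, (a5.trans a5').le]

lemma Consistent.IR_Xm' : IR P Xm' := by
  obtain ⟨-, ⟨a1, -⟩, ⟨a2, a2', -⟩, -, ⟨a4, -⟩, ⟨-, a5', -⟩⟩ := hP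
  intro s
  fin_cases s
  exacts [le_rfl, a1.le, (a2.trans a2').le, le_rfl, a4.le, a5'.le]

lemma Consistent.admissible_iff {μ : Matching} :
    Admissible P μ ↔ μ = endowment ∨ μ = Xm ∨ μ = Xm' := by
  refine ⟨Admissible.eq_endowment_or hP.acceptableWithin, ?_⟩
  rintro (rfl | rfl | rfl)
  exacts [admissible_endowment P, ⟨feasible_Xm, policy_Xm, hP.IR_Xm⟩,
    ⟨feasible_Xm', policy_Xm', hP.IR_Xm'⟩]

lemma Consistent.constrEff_IR_iff {μ : Matching} :
    (Feasible μ ∧ Policy μ ∧ ConstrEff P μ ∧ IR P μ) ↔ μ = Xm ∨ μ = Xm' := by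
  simp only [constrEff_IR_iff_admissible, hP.admissible_iff, forall_eq_or_imp, forall_eq]
  constructor
  · rintro ⟨rfl | h, -, hX, -⟩
    exacts [(hX (dominates_endowment hP.IR_Xm (by decide))).elim, h]
  · have s₁_prefers_c₆ := hP.1.1
    have s₂_prefers_c₆ := hP.2.1.1
    rintro (rfl | rfl)
    · exact ⟨.inr (.inl rfl), not_dominates_of_lt (s := 0) rfl rfl s₁_prefers_c₆,
        not_dominates_self, not_dominates_of_lt (s := 0) rfl rfl s₁_prefers_c₆⟩
    · exact ⟨.inr (.inr rfl), not_dominates_of_lt (s := 1) rfl rfl s₂_prefers_c₆,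
        not_dominates_of_lt (s := 1) rfl rfl s₂_prefers_c₆, not_dominates_self⟩

end Consistent

lemma eq_of_constrEff_of_not_IR {P : Fin 6 → Equiv.Perm (Fin 6)} {μ ν₀ ν : Matching}
    (hadm : ∀ μ, Admissible P μ → μ = endowment ∨ μ = ν₀ ∨ μ = ν) (hν₀ : ¬ IR P ν₀)
    (hν : Admissible P ν) (hne : ν ≠ endowment)
    (hμ : Feasible μ ∧ Policy μ ∧ ConstrEff P μ ∧ IR P μ) : μ = ν := by
  rw [constrEff_IR_iff_admissible] at hμ
  rcases hadm μ hμ.1 with rfl | rfl | rfl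
  · exact (hμ.2 ν hν (dominates_endowment hν.2.2 hne)).elim
  · exact (hν₀ hμ.1.2.2).elim
  · rfl

def truthfulProfile : Fin 6 → Equiv.Perm (Fin 6) :=
  ![⟨![1, 2, 3, 4, 5, 0], ![5, 0, 1, 2, 3, 4], by decide, by decide⟩,
    ⟨![2, 1, 3, 4, 5, 0], ![5, 1, 0, 2, 3, 4], by decide, by decide⟩,
    ⟨![3, 4, 2, 1, 0, 5], ![4, 3, 2, 0, 1, 5], by decide, by decide⟩,
    ⟨![2, 3, 0, 1, 4, 5], ![2, 3, 0, 1, 4, 5], by decide, by decide⟩,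
    ⟨![2, 3, 0, 4, 1, 5], ![2, 4, 0, 1, 3, 5], by decide, by decide⟩,
    ⟨![0, 1, 3, 4, 5, 2], ![0, 1, 5, 2, 3, 4], by decide, by decide⟩]

/-- `s₃` reports `c₅ ≻ c₃ ≻ ⋯`, hiding that she prefers `c₄` to `c₃`. -/
def misreport₃ : Equiv.Perm (Fin 6) :=
  ⟨![3, 4, 1, 2, 0, 5], ![4, 2, 3, 0, 1, 5], by decide, by decide⟩

/-- `s₆` reports `c₁ ≻ c₆ ≻ ⋯`, hiding that she prefers `c₂` to `c₆`. -/
def misreport₆ : Equiv.Perm (Fin 6) :=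
  ⟨![0, 2, 3, 4, 5, 1], ![0, 5, 1, 2, 3, 4], by decide, by decide⟩

lemma consistent_truthfulProfile : Consistent truthfulProfile := by
  refine ⟨⟨?_, ?_⟩, ⟨?_, ?_⟩, ⟨?_, ?_, ?_⟩, ⟨?_, ?_⟩, ⟨?_, ?_⟩, ⟨?_, ?_, ?_⟩⟩ <;> decide

lemma eq_Xm'_of_misreport₃ {μ : Matching}
    (hμ : Feasible μ ∧ Policy μ ∧ ConstrEff (Function.update truthfulProfile 2 misreport₃) μ ∧
      IR (Function.update truthfulProfile 2 misreport₃) μ) : μ = Xm' := by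
  refine eq_of_constrEff_of_not_IR (fun ν h => h.eq_endowment_or ?_) ?_
    ⟨feasible_Xm', policy_Xm', ?_⟩ (by decide) hμ
  · unfold AcceptableWithin; decide
  · unfold IR; decide
  · unfold IR; decide

lemma eq_Xm_of_misreport₆ {μ : Matching}
    (hμ : Feasible μ ∧ Policy μ ∧ ConstrEff (Function.update truthfulProfile 5 misreport₆) μ ∧
      IR (Function.update truthfulProfile 5 misreport₆) μ) : μ = Xm := by
  refine eq_of_constrEff_of_not_IR (fun ν h => (h.eq_endowment_or ?_).imp_right Or.symm) ?_
    ⟨feasible_Xm, policy_Xm, ?_⟩ (by decide) hμ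
  · unfold AcceptableWithin; decide
  · unfold IR; decide
  · unfold IR; decide

/-- Impossibility with district-level ceilings: at any profile consistent
with the stated true preferences, exactly the two matchings `X` and `X'`
satisfy feasibility, the policy goal, constrained efficiency, and individual
rationality; and no mechanism satisfies the policy goal, constrained
efficiency, individual rationality, and strategy-proofness. -/
theorem district_ceiling_impossibility :
    (∀ P : Fin 6 → Equiv.Perm (Fin 6), Consistent P →
      {μ : Matching | Feasible μ ∧ Policy μ ∧ ConstrEff P μ ∧ IR P μ} =
        {Xm, Xm'}) ∧
    ¬ ∃ φ : (Fin 6 → Equiv.Perm (Fin 6)) → Matching,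
      (∀ P, Feasible (φ P) ∧ Policy (φ P) ∧ ConstrEff P (φ P) ∧ IR P (φ P)) ∧
      -- strategy-proofness
      (∀ P s P', ¬ (wPref (P s) (φ (Function.update P s P') s) (φ P s) ∧
        φ (Function.update P s P') s ≠ φ P s)) := by
  refine ⟨fun P hP => Set.ext fun μ => hP.constrEff_IR_iff, ?_⟩
  rintro ⟨φ, hφ, hSP⟩
  rcases consistent_truthfulProfile.constrEff_IR_iff.1 (hφ truthfulProfile) with hX | hX'
  · have h := eq_Xm'_of_misreport₃ (hφ _)
    exact hSP truthfulProfile 2 misreport₃ (by rw [h, hX]; decide)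
  · have h := eq_Xm_of_misreport₆ (hφ _)
    exact hSP truthfulProfile 5 misreport₆ (by rw [h, hX']; decide)
end
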